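/- Let n ≥ 3 and let P be an n×n irreducible row-stochastic matrix (its transition digraph, with edges (a,b) whenever P(a,b) > 0, is strongly connected) in which node 1 is a leaf with unique neighbor 2, i.e., P(1,l) = 0 and P(l,1) = 0 for every l ∉ {1,2}. Let P' be the matrix equal to P in all rows except row 1, where P'(1,1) = 0, P'(1,2) = 1, and P'(1,l) = 0 for l > 2. Then for every τ ≥ 1, min_{i,j} Σ_{t=1}^{τ} F'_t(i,j) ≥ min_{i,j} Σ_{t=1}^{τ} F_t(i,j), where F'_t and F_t are the first-hitting-time probability matrices of P' and P respectively; i.e., sending the agent deterministically from the leaf to its neighbor never decreases the worst-case capture probability. -/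

import Mathlib

/-!
Write `c_τ(i, j) = ∑_{k=1}^{τ} F_k(i, j)`; it satisfies
`c_{τ+1}(i, j) = P(i, j) + ∑_{k ≠ j} P(i, k) c_τ(k, j)`.
Every path between the leaf `z` and a node outside `{z, o}` passes through the neighbour `o`,
so `c_{τ+1}(z, j) ≤ c_τ(o, j)` and `c_{τ+1}(i, z) ≤ c_τ(o, z)` for `i, j ∉ {z, o}`.
Redirecting row `z` to `o` turns `c_{τ+1}(z, j)` into `c'_τ(o, j)` (or into `1` when `j = o`),
so for `j ≠ z` an induction on `τ` gives `c ≤ c'` entrywise. Hitting `z` from `i ≠ z` never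
reads row `z`, so `c'(i, z) = c(i, z)`, and finally
`c'_{τ+1}(z, z) = c'_τ(o, z) = c_τ(o, z) ≥ c_{τ+1}(w, z)` for any third node `w`.
Thus every entry of `c'` dominates some entry of `c`.
-/

/-- First-hitting-time probability matrices: `hitF P t` is `F_{t+1}`, i.e.
`F_1 = P` and `F_{k+1} = P (F_k - Diag(F_k))`. -/
def hitF {α : Type*} [Fintype α] [DecidableEq α] (P : Matrix α α ℝ) : ℕ → Matrix α α ℝ
  | 0 => P
  | k + 1 => P * (hitF P k - Matrix.diagonal fun i => hitF P k i i)

open Finset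

variable {α : Type*} [Fintype α]

def IsLeaf (P : Matrix α α ℝ) (z o : α) : Prop :=
  ∀ l, l ≠ z → l ≠ o → P z l = 0 ∧ P l z = 0

namespace IsLeaf

variable {P : Matrix α α ℝ} {z o : α}

lemma sum_row_mul (hL : IsLeaf P z o) (hzo : z ≠ o) (f : α → ℝ) :
    ∑ k, P z k * f k = P z z * f z + P z o * f o :=
  Fintype.sum_eq_add z o hzo fun k hk => by rw [(hL k hk.1 hk.2).1, zero_mul]

lemma row_sum (hL : IsLeaf P z o) (hzo : z ≠ o) (hP1 : ∀ a, ∑ b, P a b = 1) :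
    P z z + P z o = 1 := by
  have h := hL.sum_row_mul hzo 1
  simp only [Pi.one_apply, mul_one] at h
  rw [← h, hP1]

end IsLeaf

variable [DecidableEq α]

lemma hitF_succ_apply (P : Matrix α α ℝ) (t : ℕ) (i j : α) :
    hitF P (t + 1) i j = ∑ k ∈ univ.erase j, P i k * hitF P t k j := by
  rw [hitF, Matrix.mul_apply, ← sum_erase univ (a := j) (by simp)]
  refine sum_congr rfl fun k hk => ?_
  simp [Matrix.diagonal_apply_ne _ (ne_of_mem_erase hk)]

lemma hitF_nonneg {P : Matrix α α ℝ} (hP : ∀ a b, 0 ≤ P a b) : ∀ t i j, 0 ≤ hitF P t i j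
  | 0, i, j => hP i j
  | t + 1, i, j => by
    rw [hitF_succ_apply]
    exact sum_nonneg fun k _ => mul_nonneg (hP i k) (hitF_nonneg hP t k j)

lemma hitF_eq_of_rows_eq {P P' : Matrix α α ℝ} {z : α}
    (hrest : ∀ a, a ≠ z → ∀ b, P' a b = P a b) :
    ∀ t i, i ≠ z → hitF P' t i z = hitF P t i z
  | 0, i, hi => hrest i hi z
  | t + 1, i, hi => by
    rw [hitF_succ_apply, hitF_succ_apply]
    refine sum_congr rfl fun k hk => ?_
    rw [hrest i hi, hitF_eq_of_rows_eq hrest t k (ne_of_mem_erase hk)]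

noncomputable def captureProb (P : Matrix α α ℝ) (τ : ℕ) (i j : α) : ℝ :=
  ∑ t ∈ range τ, hitF P t i j

section captureProb

variable {P P' : Matrix α α ℝ}

@[simp]
lemma captureProb_zero (P : Matrix α α ℝ) (i j : α) : captureProb P 0 i j = 0 :=
  sum_range_zero _

lemma captureProb_succ (P : Matrix α α ℝ) (τ : ℕ) (i j : α) :
    captureProb P (τ + 1) i j = P i j + ∑ k ∈ univ.erase j, P i k * captureProb P τ k j := by
  simp only [captureProb, sum_range_succ', hitF_succ_apply, mul_sum]
  rw [sum_comm, add_comm]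
  rfl

lemma captureProb_mono (hP : ∀ a b, 0 ≤ P a b) (i j : α) :
    Monotone fun τ => captureProb P τ i j := fun _ _ h =>
  sum_le_sum_of_subset_of_nonneg (range_mono h) fun t _ _ => hitF_nonneg hP t i j

lemma captureProb_le_one (hP : ∀ a b, 0 ≤ P a b) (hP1 : ∀ a, ∑ b, P a b = 1) :
    ∀ τ i j, captureProb P τ i j ≤ 1
  | 0, i, j => by simp
  | τ + 1, i, j =>
    calc captureProb P (τ + 1) i j
        ≤ P i j + ∑ k ∈ univ.erase j, P i k := by
          rw [captureProb_succ]
          gcongr with k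
          exact mul_le_of_le_one_right (hP i k) (captureProb_le_one hP hP1 τ k j)
      _ = 1 := by rw [add_sum_erase _ _ (mem_univ j), hP1]

lemma captureProb_eq_of_rows_eq {z : α} (hrest : ∀ a, a ≠ z → ∀ b, P' a b = P a b)
    (τ : ℕ) {i : α} (hi : i ≠ z) : captureProb P' τ i z = captureProb P τ i z :=
  sum_congr rfl fun t _ => hitF_eq_of_rows_eq hrest t i hi

lemma captureProb_succ_of_row_eq_single {i o : α} (hrow : ∀ l, P i l = if l = o then 1 else 0)
    (τ : ℕ) (j : α) :
    captureProb P (τ + 1) i j = if j = o then 1 else captureProb P τ o j := by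
  simp only [captureProb_succ, hrow, ite_mul, one_mul, zero_mul]
  split_ifs with hj
  · subst hj
    simp
  · simp [Ne.symm hj]

end captureProb

namespace IsLeaf

variable {P : Matrix α α ℝ} {z o : α}

lemma captureProb_succ_from_leaf_le (hL : IsLeaf P z o) (hzo : z ≠ o)
    (hP : ∀ a b, 0 ≤ P a b) (hP1 : ∀ a, ∑ b, P a b = 1) {j : α} (hjz : j ≠ z) (hjo : j ≠ o) :
    ∀ τ, captureProb P (τ + 1) z j ≤ captureProb P τ o j
  | 0 => by simp [captureProb_succ, (hL j hjz hjo).1]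
  | τ + 1 => by
    have ih := hL.captureProb_succ_from_leaf_le hzo hP hP1 hjz hjo τ
    have hzj := (hL j hjz hjo).1
    calc captureProb P (τ + 2) z j
        = P z z * captureProb P (τ + 1) z j + P z o * captureProb P (τ + 1) o j := by
          rw [captureProb_succ, hzj, zero_add, sum_erase _ (by rw [hzj, zero_mul]),
            hL.sum_row_mul hzo]
      _ ≤ P z z * captureProb P (τ + 1) o j + P z o * captureProb P (τ + 1) o j := by
          gcongr
          · exact hP z z
          · exact ih.trans (captureProb_mono hP o j τ.le_succ)
      _ = captureProb P (τ + 1) o j := by rw [← add_mul, hL.row_sum hzo hP1, one_mul]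

lemma captureProb_succ_to_leaf_le (hL : IsLeaf P z o)
    (hP : ∀ a b, 0 ≤ P a b) (hP1 : ∀ a, ∑ b, P a b = 1) :
    ∀ τ i, i ≠ z → i ≠ o → captureProb P (τ + 1) i z ≤ captureProb P τ o z
  | 0, i, hiz, hio => by simp [captureProb_succ, (hL i hiz hio).2]
  | τ + 1, i, hiz, hio => by
    have hiz' := (hL i hiz hio).2
    calc captureProb P (τ + 2) i z
        ≤ ∑ k ∈ univ.erase z, P i k * captureProb P (τ + 1) o z := by
          rw [captureProb_succ, hiz', zero_add]
          refine sum_le_sum fun k hk => mul_le_mul_of_nonneg_left ?_ (hP i k)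
          by_cases hko : k = o
          · rw [hko]
          · exact (hL.captureProb_succ_to_leaf_le hP hP1 τ k (ne_of_mem_erase hk) hko).trans
              (captureProb_mono hP o z τ.le_succ)
      _ = captureProb P (τ + 1) o z := by
          rw [← sum_mul, sum_erase _ hiz', hP1, one_mul]

end IsLeaf

section redirect

variable {P P' : Matrix α α ℝ} {z o : α}

lemma captureProb_le_redirect (hP : ∀ a b, 0 ≤ P a b) (hP1 : ∀ a, ∑ b, P a b = 1)
    (hL : IsLeaf P z o) (hzo : z ≠ o) (hrow : ∀ l, P' z l = if l = o then 1 else 0)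
    (hrest : ∀ a, a ≠ z → ∀ b, P' a b = P a b) {j : α} (hjz : j ≠ z) :
    ∀ τ i, captureProb P τ i j ≤ captureProb P' τ i j
  | 0, i => by simp
  | τ + 1, i => by
    have ih := captureProb_le_redirect hP hP1 hL hzo hrow hrest hjz τ
    by_cases hiz : i = z
    · subst hiz
      rw [captureProb_succ_of_row_eq_single hrow]
      split_ifs with hjo
      · exact captureProb_le_one hP hP1 _ _ _
      · exact (hL.captureProb_succ_from_leaf_le hzo hP hP1 hjz hjo τ).trans (ih o)
    · rw [captureProb_succ, captureProb_succ]
      simp only [hrest i hiz]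
      exact add_le_add le_rfl (sum_le_sum fun k _ => mul_le_mul_of_nonneg_left (ih k) (hP i k))

lemma captureProb_le_redirect_leaf (hP : ∀ a b, 0 ≤ P a b) (hP1 : ∀ a, ∑ b, P a b = 1)
    (hL : IsLeaf P z o) (hzo : z ≠ o) (hrow : ∀ l, P' z l = if l = o then 1 else 0)
    (hrest : ∀ a, a ≠ z → ∀ b, P' a b = P a b) {w : α} (hwz : w ≠ z) (hwo : w ≠ o) :
    ∀ τ, captureProb P τ w z ≤ captureProb P' τ z z
  | 0 => by simp
  | τ + 1 =>
    calc captureProb P (τ + 1) w z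
        ≤ captureProb P τ o z := hL.captureProb_succ_to_leaf_le hP hP1 τ w hwz hwo
      _ = captureProb P' τ o z := (captureProb_eq_of_rows_eq hrest τ hzo.symm).symm
      _ = captureProb P' (τ + 1) z z := by
          rw [captureProb_succ_of_row_eq_single hrow, if_neg hzo]

lemma exists_captureProb_le_redirect (hP : ∀ a b, 0 ≤ P a b) (hP1 : ∀ a, ∑ b, P a b = 1)
    (hL : IsLeaf P z o) (hzo : z ≠ o) (hrow : ∀ l, P' z l = if l = o then 1 else 0)
    (hrest : ∀ a, a ≠ z → ∀ b, P' a b = P a b) {w : α} (hwz : w ≠ z) (hwo : w ≠ o)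
    (τ : ℕ) (i j : α) : ∃ q : α × α, captureProb P τ q.1 q.2 ≤ captureProb P' τ i j := by
  by_cases hjz : j = z
  · subst hjz
    by_cases hiz : i = j
    · subst hiz
      exact ⟨(w, i), captureProb_le_redirect_leaf hP hP1 hL hzo hrow hrest hwz hwo τ⟩
    · exact ⟨(i, j), (captureProb_eq_of_rows_eq hrest τ hiz).ge⟩
  · exact ⟨(i, j), captureProb_le_redirect hP hP1 hL hzo hrow hrest hjz τ i⟩

end redirect

/-- Dominant strategy on leaf nodes: if node `1` (index `⟨0,_⟩`) is a leaf of the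
irreducible row-stochastic chain `P` with unique neighbor node `2` (index `⟨1,_⟩`),
then replacing row `1` by the deterministic move to its neighbor never decreases the
worst-case capture probability `min_{i,j} ℙ(T_ij ≤ τ)`. -/
theorem stmt_10 (n : ℕ) (hn : 3 ≤ n) (P P' : Matrix (Fin n) (Fin n) ℝ)
    (hP0 : ∀ a b, 0 ≤ P a b) (hP1 : ∀ a, ∑ b, P a b = 1)
    (hleaf : ∀ l : Fin n, l ≠ ⟨0, by omega⟩ → l ≠ ⟨1, by omega⟩ →
      P ⟨0, by omega⟩ l = 0 ∧ P l ⟨0, by omega⟩ = 0)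
    (hP'row : ∀ l : Fin n, P' ⟨0, by omega⟩ l = if l = ⟨1, by omega⟩ then 1 else 0)
    (hP'rest : ∀ a : Fin n, a ≠ ⟨0, by omega⟩ → ∀ b : Fin n, P' a b = P a b)
    (τ : ℕ) :
    Finset.univ.inf' ⟨((⟨0, by omega⟩ : Fin n), (⟨0, by omega⟩ : Fin n)), Finset.mem_univ _⟩
        (fun p : Fin n × Fin n => ∑ t ∈ Finset.range τ, hitF P t p.1 p.2) ≤
      Finset.univ.inf' ⟨((⟨0, by omega⟩ : Fin n), (⟨0, by omega⟩ : Fin n)), Finset.mem_univ _⟩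
        (fun p : Fin n × Fin n => ∑ t ∈ Finset.range τ, hitF P' t p.1 p.2) := by
  have hzo : (⟨0, by omega⟩ : Fin n) ≠ ⟨1, by omega⟩ := by simp
  have hwz : (⟨2, by omega⟩ : Fin n) ≠ ⟨0, by omega⟩ := by simp
  have hwo : (⟨2, by omega⟩ : Fin n) ≠ ⟨1, by omega⟩ := by simp
  refine le_inf' _ _ fun p _ => ?_
  obtain ⟨q, hq⟩ :=
    exists_captureProb_le_redirect hP0 hP1 hleaf hzo hP'row hP'rest hwz hwo τ p.1 p.2
  exact inf'_le_of_le _ (mem_univ q) hq
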